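/- arXiv:2105.07766 — 2 statements merged into one kernel-verified Lean document; each statement's English description precedes it below -/
import Mathlib

section
/- For every n ≥ 1, ν₁, ν₂ ≥ 0 and x ≥ 0, the Stancu-type operator applied to s ↦ s² satisfies L_n^{(ν₁,ν₂)}(s²; x) = [A₂''(nx·h(1))·n² / (A₂(nx·h(1))·(n+ν₂)²)]·x² + {[(1+2ν₁+h''(1))·A₁(h(1)) + 2A₁'(h(1))]·A₂'(nx·h(1))·n / [A₁(h(1))·A₂(nx·h(1))·(n+ν₂)²]}·x + [ν₁²·A₁(h(1)) + (1+2ν₁+h''(1))·A₁'(h(1)) + A₁''(h(1))] / [A₁(h(1))·(n+ν₂)²]. -/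
/-!
Since `t d/dt` multiplies the `k`-th coefficient of a power series by `k`, the moment
`∑ₖ pₖ(x) (k + ν)²` is a combination of `G(1)`, `G'(1)`, `G''(1)` for the generating
function `G(t) = A₁(h t) · A₂(x · h t)`, and the Leibniz and chain rules expand `G''(1)`
into the formula. This needs `A₁` and `A₂` to be twice differentiable at `h 1` and
`x · h 1`, which may lie outside the interval where their power series converge. Both are
analytic there: `A₁ ∘ h = G₀ / A₂(0)` and `A₂ ∘ (x · h) = G / (A₁ ∘ h)` are analytic at `1`,
and `h'(1) = 1 ≠ 0` lets us invert `h` locally.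
-/

/-- Data for generalized Brenke polynomials: analytic functions `A₁, A₂, h`
given by power series on `{t : |t| < R}` (`R > 1`), with `A₁, A₂ > 0` on `ℝ`,
`h'(1) = 1`, and polynomials `p k` satisfying the generating relation
`A₁(h(t)) · A₂(x · h(t)) = ∑ₖ p k x · tᵏ` with `p k x ≥ 0` for `x ≥ 0`. -/
structure BrenkeData where
  R : ℝ
  A₁ : ℝ → ℝ
  A₂ : ℝ → ℝ
  h : ℝ → ℝ
  a₁ : ℕ → ℝ
  a₂ : ℕ → ℝ
  c : ℕ → ℝ
  p : ℕ → ℝ → ℝ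
  hR : 1 < R
  ha₁ : a₁ 0 ≠ 0
  ha₂ : ∀ k, a₂ k ≠ 0
  hc0 : c 0 = 0
  hc1 : c 1 ≠ 0
  hA₁ : ∀ t : ℝ, |t| < R → HasSum (fun k => a₁ k * t ^ k) (A₁ t)
  hA₂ : ∀ t : ℝ, |t| < R → HasSum (fun k => a₂ k * t ^ k) (A₂ t)
  hh : ∀ t : ℝ, |t| < R → HasSum (fun k => c k * t ^ k) (h t)
  hA₁pos : ∀ t : ℝ, 0 < A₁ t
  hA₂pos : ∀ t : ℝ, 0 < A₂ t
  hh1 : deriv h 1 = 1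
  hgen : ∀ x t : ℝ, |t| < R → HasSum (fun k => p k x * t ^ k) (A₁ (h t) * A₂ (x * h t))
  hpos : ∀ (k : ℕ) (x : ℝ), 0 ≤ x → 0 ≤ p k x

/-- The Stancu type operator `L_n^{(ν₁,ν₂)}` including generalized Brenke polynomials. -/
noncomputable def stancuL (B : BrenkeData) (ν₁ ν₂ : ℝ) (n : ℕ) (f : ℝ → ℝ) (x : ℝ) : ℝ :=
  (B.A₁ (B.h 1) * B.A₂ (n * x * B.h 1))⁻¹ *
    ∑' k : ℕ, B.p k (n * x) * f ((k + ν₁) / (n + ν₂))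

open Filter Topology FormalMultilinearSeries

def HasPowerSeriesOn (f : ℝ → ℝ) (a : ℕ → ℝ) (R : ℝ) : Prop :=
  ∀ t : ℝ, |t| < R → HasSum (fun k => a k * t ^ k) (f t)

namespace HasPowerSeriesOn

variable {f : ℝ → ℝ} {a : ℕ → ℝ} {R : ℝ}

theorem hasFPowerSeriesOnBall (hf : HasPowerSeriesOn f a R) (hR : 0 < R) :
    HasFPowerSeriesOnBall f (ofScalars ℝ a) 0 (ENNReal.ofReal R) where
  r_le := by
    refine ENNReal.le_of_forall_nnreal_lt fun r hr => le_radius_of_summable _ ?_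
    have hrR : |(r : ℝ)| < R := by
      rw [NNReal.abs_eq]
      exact ENNReal.coe_lt_ofReal.1 hr
    simpa [ofScalars_norm, abs_mul] using (hf r hrR).summable.abs
  r_pos := ENNReal.ofReal_pos.2 hR
  hasSum := fun {y} hy => by
    have hy : |y| < R := by simpa [Metric.mem_eball, edist_dist, Real.dist_eq] using hy
    simpa [ofScalars_apply_eq, mul_comm] using hf y hy

theorem analyticAt (hf : HasPowerSeriesOn f a R) {t : ℝ} (ht : |t| < R) : AnalyticAt ℝ f t :=
  (hf.hasFPowerSeriesOnBall ((abs_nonneg t).trans_lt ht)).analyticAt_of_mem <| by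
    simpa [Metric.mem_eball, edist_dist, Real.dist_eq] using ht

theorem id_mul_deriv (hf : HasPowerSeriesOn f a R) :
    HasPowerSeriesOn (fun t => t * deriv f t) (fun k => k * a k) R := by
  intro t ht
  have hball := hf.hasFPowerSeriesOnBall ((abs_nonneg t).trans_lt ht)
  have hd := (hball.fderiv.hasSum (y := t) (by
    simpa [Metric.mem_eball, edist_dist, Real.dist_eq] using ht)).mapL
      (ContinuousLinearMap.apply ℝ ℝ t)
  simp only [ContinuousLinearMap.apply_apply, derivSeries_apply_diag, ofScalars_apply_eq,
    zero_add, fderiv_eq_smul_deriv, smul_eq_mul] at hd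
  refine (hasSum_nat_add_iff' 1).1 ?_
  simpa [mul_assoc, pow_succ] using hd

theorem hasSum_mul_add_sq (hf : HasPowerSeriesOn f a R) {t : ℝ} (ht : |t| < R) (ν : ℝ) :
    HasSum (fun k => a k * (k + ν) ^ 2 * t ^ k)
      (t ^ 2 * deriv (deriv f) t + (1 + 2 * ν) * t * deriv f t + ν ^ 2 * f t) := by
  have hderiv : deriv (fun s => s * deriv f s) t = deriv f t + t * deriv (deriv f) t := by
    simpa using
      ((hasDerivAt_id' t).fun_mul (hf.analyticAt ht).deriv.differentiableAt.hasDerivAt).deriv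
  have h2 := hf.id_mul_deriv.id_mul_deriv t ht
  have h1 := (hf.id_mul_deriv t ht).mul_left (2 * ν)
  have h0 := (hf t ht).mul_left (ν ^ 2)
  convert (h2.add h1).add h0 using 1
  · ext k; ring
  · simp only [hderiv]; ring

end HasPowerSeriesOn

section SecondDerivative

variable {𝕜 : Type*} [NontriviallyNormedField 𝕜] [CompleteSpace 𝕜] {f g : 𝕜 → 𝕜} {x : 𝕜}

theorem AnalyticAt.deriv_deriv_mul (hf : AnalyticAt 𝕜 f x) (hg : AnalyticAt 𝕜 g x) :
    deriv (deriv fun t => f t * g t) x =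
      deriv (deriv f) x * g x + 2 * deriv f x * deriv g x + f x * deriv (deriv g) x := by
  have hderiv : deriv (fun t => f t * g t) =ᶠ[𝓝 x]
      fun t => deriv f t * g t + f t * deriv g t := by
    filter_upwards [hf.eventually_analyticAt, hg.eventually_analyticAt] with t hft hgt
    exact deriv_mul hft.differentiableAt hgt.differentiableAt
  rw [hderiv.deriv_eq, ((hf.deriv.differentiableAt.hasDerivAt.fun_mul
    hg.differentiableAt.hasDerivAt).fun_add
      (hf.differentiableAt.hasDerivAt.fun_mul hg.deriv.differentiableAt.hasDerivAt)).deriv]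
  ring

theorem AnalyticAt.deriv_deriv_comp {A : 𝕜 → 𝕜} (hA : AnalyticAt 𝕜 A (f x))
    (hf : AnalyticAt 𝕜 f x) :
    deriv (deriv fun t => A (f t)) x =
      deriv (deriv A) (f x) * deriv f x ^ 2 + deriv A (f x) * deriv (deriv f) x := by
  have hderiv : deriv (fun t => A (f t)) =ᶠ[𝓝 x] fun t => deriv A (f t) * deriv f t := by
    filter_upwards [hf.eventually_analyticAt,
      hf.continuousAt.eventually hA.eventually_analyticAt] with t hft hAt
    exact deriv_comp t hAt.differentiableAt hft.differentiableAt
  have hsecond := ((hA.deriv.differentiableAt.hasDerivAt.comp x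
    hf.differentiableAt.hasDerivAt).fun_mul hf.deriv.differentiableAt.hasDerivAt).deriv
  simp only [Function.comp_apply] at hsecond
  rw [hderiv.deriv_eq, hsecond]
  ring

end SecondDerivative

namespace BrenkeData

variable (B : BrenkeData)

def gen (x t : ℝ) : ℝ := B.A₁ (B.h t) * B.A₂ (x * B.h t)

theorem hasPowerSeriesOn_gen (x : ℝ) : HasPowerSeriesOn (B.gen x) (fun k => B.p k x) B.R :=
  B.hgen x

theorem abs_one_lt_R : |(1 : ℝ)| < B.R := by simpa using B.hR

theorem analyticAt_h : AnalyticAt ℝ B.h 1 := HasPowerSeriesOn.analyticAt B.hh B.abs_one_lt_R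

theorem analyticAt_mul_h (y : ℝ) : AnalyticAt ℝ (fun t => y * B.h t) 1 :=
  analyticAt_const.mul B.analyticAt_h

theorem analyticAt_A₁ : AnalyticAt ℝ B.A₁ (B.h 1) := by
  rw [← analyticAt_comp_iff_of_deriv_ne_zero B.analyticAt_h (by simp [B.hh1])]
  have hgen := (B.hasPowerSeriesOn_gen 0).analyticAt B.abs_one_lt_R
  refine (hgen.div_const (c := B.A₂ 0)).congr (Eventually.of_forall fun t => ?_)
  simp [gen, (B.hA₂pos 0).ne']

theorem analyticAt_A₁_comp_h : AnalyticAt ℝ (fun t => B.A₁ (B.h t)) 1 :=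
  B.analyticAt_A₁.comp B.analyticAt_h

theorem analyticAt_A₂ (y : ℝ) : AnalyticAt ℝ B.A₂ (y * B.h 1) := by
  rcases eq_or_ne y 0 with rfl | hy
  · simpa using HasPowerSeriesOn.analyticAt B.hA₂ (by simpa using B.hR.trans' one_pos)
  rw [← analyticAt_comp_iff_of_deriv_ne_zero (B.analyticAt_mul_h y) (by simp [B.hh1, hy])]
  have hgen := (B.hasPowerSeriesOn_gen y).analyticAt B.abs_one_lt_R
  refine (hgen.div B.analyticAt_A₁_comp_h (B.hA₁pos _).ne').congr
    (Eventually.of_forall fun t => ?_)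
  simp [gen, (B.hA₁pos _).ne']

theorem analyticAt_A₂_comp_mul_h (y : ℝ) : AnalyticAt ℝ (fun t => B.A₂ (y * B.h t)) 1 :=
  (B.analyticAt_A₂ y).comp (f := fun t => y * B.h t) (B.analyticAt_mul_h y)

theorem hasDerivAt_A₁_comp_h :
    HasDerivAt (fun t => B.A₁ (B.h t)) (deriv B.A₁ (B.h 1)) 1 := by
  simpa [Function.comp_def, B.hh1] using
    B.analyticAt_A₁.differentiableAt.hasDerivAt.comp 1 B.analyticAt_h.differentiableAt.hasDerivAt

theorem hasDerivAt_A₂_comp_mul_h (y : ℝ) :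
    HasDerivAt (fun t => B.A₂ (y * B.h t)) (deriv B.A₂ (y * B.h 1) * y) 1 := by
  simpa [Function.comp_def, B.hh1] using (B.analyticAt_A₂ y).differentiableAt.hasDerivAt.comp 1
    (B.analyticAt_h.differentiableAt.hasDerivAt.const_mul y)

theorem deriv_deriv_A₁_comp_h : deriv (deriv fun t => B.A₁ (B.h t)) 1 =
    deriv (deriv B.A₁) (B.h 1) + deriv B.A₁ (B.h 1) * deriv (deriv B.h) 1 := by
  simp [B.analyticAt_A₁.deriv_deriv_comp B.analyticAt_h, B.hh1]

theorem deriv_deriv_A₂_comp_mul_h (y : ℝ) : deriv (deriv fun t => B.A₂ (y * B.h t)) 1 =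
    deriv (deriv B.A₂) (y * B.h 1) * y ^ 2
      + deriv B.A₂ (y * B.h 1) * (y * deriv (deriv B.h) 1) := by
  simp [(B.analyticAt_A₂ y).deriv_deriv_comp (f := fun t => y * B.h t) (B.analyticAt_mul_h y),
    deriv_const_mul_field', B.hh1]

theorem deriv_gen (y : ℝ) : deriv (B.gen y) 1 =
    deriv B.A₁ (B.h 1) * B.A₂ (y * B.h 1) + B.A₁ (B.h 1) * (deriv B.A₂ (y * B.h 1) * y) :=
  (B.hasDerivAt_A₁_comp_h.mul (B.hasDerivAt_A₂_comp_mul_h y)).deriv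

theorem deriv_deriv_gen (y : ℝ) : deriv (deriv (B.gen y)) 1 =
    (deriv (deriv B.A₁) (B.h 1) + deriv B.A₁ (B.h 1) * deriv (deriv B.h) 1) * B.A₂ (y * B.h 1)
      + 2 * deriv B.A₁ (B.h 1) * (deriv B.A₂ (y * B.h 1) * y)
      + B.A₁ (B.h 1) * (deriv (deriv B.A₂) (y * B.h 1) * y ^ 2
        + deriv B.A₂ (y * B.h 1) * (y * deriv (deriv B.h) 1)) := by
  unfold gen
  rw [B.analyticAt_A₁_comp_h.deriv_deriv_mul (B.analyticAt_A₂_comp_mul_h y),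
    B.hasDerivAt_A₁_comp_h.deriv, (B.hasDerivAt_A₂_comp_mul_h y).deriv,
    B.deriv_deriv_A₁_comp_h, B.deriv_deriv_A₂_comp_mul_h]

end BrenkeData

theorem stancuL_sq_general (B : BrenkeData) (ν₁ ν₂ : ℝ)
    (n : ℕ) (x : ℝ) :
    stancuL B ν₁ ν₂ n (fun s => s ^ 2) x =
      deriv (deriv B.A₂) (n * x * B.h 1) * n ^ 2
          / (B.A₂ (n * x * B.h 1) * (n + ν₂) ^ 2) * x ^ 2
        + ((1 + 2 * ν₁ + deriv (deriv B.h) 1) * B.A₁ (B.h 1) + 2 * deriv B.A₁ (B.h 1))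
            * deriv B.A₂ (n * x * B.h 1) * n
            / (B.A₁ (B.h 1) * B.A₂ (n * x * B.h 1) * (n + ν₂) ^ 2) * x
        + (ν₁ ^ 2 * B.A₁ (B.h 1) + (1 + 2 * ν₁ + deriv (deriv B.h) 1) * deriv B.A₁ (B.h 1)
            + deriv (deriv B.A₁) (B.h 1)) / (B.A₁ (B.h 1) * (n + ν₂) ^ 2) := by
  have hmom := (B.hasPowerSeriesOn_gen (n * x)).hasSum_mul_add_sq B.abs_one_lt_R ν₁
  rw [B.deriv_deriv_gen, B.deriv_gen, BrenkeData.gen] at hmom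
  have hsum := hmom.div_const ((n + ν₂) ^ 2)
  simp only [one_pow, mul_one, mul_div_assoc, ← div_pow] at hsum
  rw [stancuL, hsum.tsum_eq]
  have hA₁ := (B.hA₁pos (B.h 1)).ne'
  have hA₂ := (B.hA₂pos (n * x * B.h 1)).ne'
  field_simp
  ring

/-- `L_n^{(ν₁,ν₂)}(s²; x)` formula. -/
theorem stancuL_sq (B : BrenkeData) (ν₁ ν₂ : ℝ) (hν₁ : 0 ≤ ν₁) (hν₂ : 0 ≤ ν₂)
    (n : ℕ) (hn : 1 ≤ n) (x : ℝ) (hx : 0 ≤ x) :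
    stancuL B ν₁ ν₂ n (fun s => s ^ 2) x =
      deriv (deriv B.A₂) (n * x * B.h 1) * n ^ 2
          / (B.A₂ (n * x * B.h 1) * (n + ν₂) ^ 2) * x ^ 2
        + ((1 + 2 * ν₁ + deriv (deriv B.h) 1) * B.A₁ (B.h 1) + 2 * deriv B.A₁ (B.h 1))
            * deriv B.A₂ (n * x * B.h 1) * n
            / (B.A₁ (B.h 1) * B.A₂ (n * x * B.h 1) * (n + ν₂) ^ 2) * x
        + (ν₁ ^ 2 * B.A₁ (B.h 1) + (1 + 2 * ν₁ + deriv (deriv B.h) 1) * deriv B.A₁ (B.h 1)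
            + deriv (deriv B.A₁) (B.h 1)) / (B.A₁ (B.h 1) * (n + ν₂) ^ 2) :=
  stancuL_sq_general B ν₁ ν₂ n x
end

section
/- Let 0 < α ≤ 1, M > 0, and let f : [0,∞) → ℝ satisfy |f(t₁) − f(t₂)| ≤ M·|t₁ − t₂|^α for all t₁, t₂ ∈ [0,∞). Then for all n ≥ 1 and x ≥ 0, |L_n^{(ν₁,ν₂)}(f; x) − f(x)| ≤ M·(δ_n(x))^α, where δ_n(x) = √(L_n^{(ν₁,ν₂)}((s−x)²; x)). -/
open Real

theorem rpow_le_one_add_self {a p : ℝ} (ha : 0 ≤ a) (hp0 : 0 ≤ p) (hp1 : p ≤ 1) :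
    a ^ p ≤ 1 + a := by
  rcases le_or_gt a 1 with h | h
  · linarith [rpow_le_one ha h hp0]
  · linarith [rpow_le_self_of_one_le h.le hp1]

theorem sqrt_rpow_eq_rpow_half {v : ℝ} (hv : 0 ≤ v) (α : ℝ) : √v ^ α = v ^ (α / 2) := by
  rw [sqrt_eq_rpow, ← rpow_mul hv, one_div_mul_eq_div]

theorem tsum_mul_rpow_le_rpow_tsum_mul {ι : Type*} {w v : ι → ℝ} {p : ℝ}
    (hw : ∀ i, 0 ≤ w i) (hw1 : HasSum w 1) (hv : ∀ i, 0 ≤ v i) (hp0 : 0 < p) (hp1 : p < 1)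
    (hwv : Summable fun i => w i * v i) :
    ∑' i, w i * v i ^ p ≤ (∑' i, w i * v i) ^ p := by
  have hwv0 : ∀ i, 0 ≤ w i * v i := fun i => mul_nonneg (hw i) (hv i)
  have hsplit : ∀ i, w i * v i ^ p = (w i * v i) ^ p * w i ^ (1 - p) := fun i => by
    rw [mul_rpow (hw i) (hv i), mul_right_comm, ← rpow_add' (hw i) (by simp),
      add_sub_cancel, rpow_one]
  calc ∑' i, w i * v i ^ p = ∑' i, (w i * v i) ^ p * w i ^ (1 - p) := tsum_congr hsplit
    _ ≤ (∑' i, ((w i * v i) ^ p) ^ p⁻¹) ^ (1 / p⁻¹) *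
          (∑' i, (w i ^ (1 - p)) ^ (1 - p)⁻¹) ^ (1 / (1 - p)⁻¹) :=
        inner_le_Lp_mul_Lq_tsum_of_nonneg (.inv_one_sub_inv hp0 hp1)
          (fun i => rpow_nonneg (hwv0 i) _) (fun i => rpow_nonneg (hw i) _)
          (hwv.congr fun i => (rpow_rpow_inv (hwv0 i) hp0.ne').symm)
          (hw1.summable.congr fun i => (rpow_rpow_inv (hw i) (sub_ne_zero.2 hp1.ne')).symm)
    _ = (∑' i, w i * v i) ^ p := by
        simp only [rpow_rpow_inv (hwv0 _) hp0.ne', rpow_rpow_inv (hw _) (sub_ne_zero.2 hp1.ne'),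
          hw1.tsum_eq, one_div, inv_inv, one_rpow, mul_one]

theorem abs_tsum_mul_sub_le_mul_sqrt_rpow {ι : Type*} {w s : ι → ℝ} {f : ℝ → ℝ} {x M α : ℝ}
    (hw : ∀ i, 0 ≤ w i) (hw1 : HasSum w 1) (hα0 : 0 < α) (hα2 : α < 2) (hM : 0 ≤ M)
    (hf : ∀ i, |f (s i) - f x| ≤ M * |s i - x| ^ α)
    (hs : Summable fun i => w i * (s i - x) ^ 2) :
    |∑' i, w i * f (s i) - f x| ≤ M * √(∑' i, w i * (s i - x) ^ 2) ^ α := by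
  have hpow : ∀ i, |s i - x| ^ α = ((s i - x) ^ 2) ^ (α / 2) := fun i => by
    rw [← sqrt_sq_eq_abs, sqrt_rpow_eq_rpow_half (sq_nonneg _)]
  have hmoment : Summable fun i => w i * ((s i - x) ^ 2) ^ (α / 2) :=
    .of_nonneg_of_le (fun i => mul_nonneg (hw i) (by positivity))
      (fun i => mul_le_mul_of_nonneg_left
        (rpow_le_one_add_self (sq_nonneg _) (by positivity) (by linarith)) (hw i))
      ((hw1.summable.add hs).congr fun i => (mul_one_add _ _).symm)
  have hbound : ∀ i, ‖w i * (f (s i) - f x)‖ ≤ M * (w i * ((s i - x) ^ 2) ^ (α / 2)) :=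
    fun i => by
      rw [norm_mul, Real.norm_of_nonneg (hw i), Real.norm_eq_abs, ← hpow, mul_left_comm]
      exact mul_le_mul_of_nonneg_left (hf i) (hw i)
  have hdiff : Summable fun i => w i * (f (s i) - f x) :=
    .of_norm_bounded (hmoment.mul_left M) hbound
  have hcentre : ∑' i, w i * f (s i) - f x = ∑' i, w i * (f (s i) - f x) := by
    have h := (hdiff.hasSum.add (hw1.mul_right (f x))).tsum_eq
    simp only [← mul_add, sub_add_cancel, one_mul] at h
    rw [h, add_sub_cancel_right]
  calc |∑' i, w i * f (s i) - f x| = ‖∑' i, w i * (f (s i) - f x)‖ := by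
        rw [hcentre, Real.norm_eq_abs]
    _ ≤ M * ∑' i, w i * ((s i - x) ^ 2) ^ (α / 2) :=
        tsum_of_norm_bounded (hmoment.hasSum.mul_left M) hbound
    _ ≤ M * (∑' i, w i * (s i - x) ^ 2) ^ (α / 2) := by
        gcongr
        exact tsum_mul_rpow_le_rpow_tsum_mul hw hw1 (fun i => sq_nonneg _) (by positivity)
          (by linarith) hs
    _ = M * √(∑' i, w i * (s i - x) ^ 2) ^ α := by
        rw [sqrt_rpow_eq_rpow_half (tsum_nonneg fun i => mul_nonneg (hw i) (sq_nonneg _))]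

theorem summable_mul_pow_of_summable_mul_geometric {a : ℕ → ℝ} {t : ℝ} (ht : 1 < t)
    (h : Summable fun k => a k * t ^ k) (m : ℕ) : Summable fun k => a k * (k : ℝ) ^ m := by
  have ht0 : 0 < t := by linarith
  have hr : ‖t⁻¹‖ < 1 := by
    rw [norm_inv, Real.norm_of_nonneg ht0.le]
    exact inv_lt_one_of_one_lt₀ ht
  refine .of_norm_bounded ((summable_pow_mul_geometric_of_norm_lt_one m hr).mul_left
    (∑' j, |a j * t ^ j|)) fun k => ?_
  have hsplit : a k * (k : ℝ) ^ m = a k * t ^ k * ((k : ℝ) ^ m * t⁻¹ ^ k) :=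
    calc a k * (k : ℝ) ^ m = a k * (k : ℝ) ^ m * (t * t⁻¹) ^ k := by
          rw [mul_inv_cancel₀ ht0.ne', one_pow, mul_one]
      _ = a k * t ^ k * ((k : ℝ) ^ m * t⁻¹ ^ k) := by ring
  rw [hsplit, norm_mul, Real.norm_eq_abs, Real.norm_of_nonneg (by positivity)]
  gcongr
  exact h.abs.le_tsum k fun j _ => abs_nonneg _

theorem summable_mul_affine_sq {g : ℕ → ℝ} (hg : ∀ m : ℕ, Summable fun k => g k * (k : ℝ) ^ m)
    (c d : ℝ) : Summable fun k => g k * (c * k + d) ^ 2 :=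
  (((hg 2).mul_left (c ^ 2)).add
    (((hg 1).mul_left (2 * c * d)).add ((hg 0).mul_left (d ^ 2)))).congr fun k => by ring

namespace BrenkeData

variable (B : BrenkeData)

noncomputable def weight (y : ℝ) (k : ℕ) : ℝ := (B.A₁ (B.h 1) * B.A₂ (y * B.h 1))⁻¹ * B.p k y

theorem weight_nonneg {y : ℝ} (hy : 0 ≤ y) (k : ℕ) : 0 ≤ B.weight y k :=
  mul_nonneg (inv_nonneg.2 (mul_pos (B.hA₁pos _) (B.hA₂pos _)).le) (B.hpos k y hy)

theorem hasSum_weight (y : ℝ) : HasSum (B.weight y) 1 := by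
  have hS := (mul_pos (B.hA₁pos (B.h 1)) (B.hA₂pos (y * B.h 1))).ne'
  have h := (B.hgen y 1 (by rw [abs_one]; exact B.hR)).mul_left (B.A₁ (B.h 1) * B.A₂ (y * B.h 1))⁻¹
  simp only [one_pow, mul_one, inv_mul_cancel₀ hS] at h
  exact h

theorem summable_weight_mul_pow (y : ℝ) (m : ℕ) :
    Summable fun k => B.weight y k * (k : ℝ) ^ m := by
  have hR := B.hR
  have h := B.hgen y ((1 + B.R) / 2) (by rw [abs_of_pos (by linarith)]; linarith)
  simpa only [weight, mul_assoc] using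
    (summable_mul_pow_of_summable_mul_geometric (by linarith) h.summable m).mul_left
      (B.A₁ (B.h 1) * B.A₂ (y * B.h 1))⁻¹

end BrenkeData

theorem stancuL_eq_tsum_weight (B : BrenkeData) (ν₁ ν₂ : ℝ) (n : ℕ) (F : ℝ → ℝ) (x : ℝ) :
    stancuL B ν₁ ν₂ n F x = ∑' k : ℕ, B.weight (n * x) k * F ((k + ν₁) / (n + ν₂)) := by
  simp only [stancuL, BrenkeData.weight, mul_assoc, tsum_mul_left]

theorem stancuL_lipschitz_estimate_general (B : BrenkeData) (ν₁ ν₂ : ℝ) (hν₁ : 0 ≤ ν₁) (hν₂ : 0 ≤ ν₂)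
    (α M : ℝ) (hα : 0 < α) (hα1 : α ≤ 1) (hM : 0 < M)
    (f : ℝ → ℝ) (hf : ∀ t₁ t₂ : ℝ, 0 ≤ t₁ → 0 ≤ t₂ → |f t₁ - f t₂| ≤ M * |t₁ - t₂| ^ α)
    (n : ℕ) (x : ℝ) (hx : 0 ≤ x) :
    |stancuL B ν₁ ν₂ n f x - f x| ≤
      M * (Real.sqrt (stancuL B ν₁ ν₂ n (fun s => (s - x) ^ 2) x)) ^ α := by
  have hnodes : ∀ k : ℕ, 0 ≤ ((k : ℝ) + ν₁) / (n + ν₂) := fun k => by positivity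
  have hmoment : Summable fun k : ℕ => B.weight (n * x) k * ((k + ν₁) / (n + ν₂) - x) ^ 2 :=
    (summable_mul_affine_sq (B.summable_weight_mul_pow _) (n + ν₂)⁻¹ (ν₁ / (n + ν₂) - x)).congr
      fun k => by ring
  rw [stancuL_eq_tsum_weight, stancuL_eq_tsum_weight]
  exact abs_tsum_mul_sub_le_mul_sqrt_rpow (B.weight_nonneg (by positivity)) (B.hasSum_weight _)
    hα (by linarith) hM.le (fun k => hf _ _ (hnodes k) hx) hmoment

/-- Theorem 2.3: for `f` Lipschitz of order `α` with constant `M` on `[0,∞)`,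
`|L_n^{(ν₁,ν₂)}(f;x) − f(x)| ≤ M · (δₙ(x))^α` with `δₙ(x) = √(L_n^{(ν₁,ν₂)}((s−x)²; x))`. -/
theorem stancuL_lipschitz_estimate (B : BrenkeData) (ν₁ ν₂ : ℝ) (hν₁ : 0 ≤ ν₁) (hν₂ : 0 ≤ ν₂)
    (α M : ℝ) (hα : 0 < α) (hα1 : α ≤ 1) (hM : 0 < M)
    (f : ℝ → ℝ) (hf : ∀ t₁ t₂ : ℝ, 0 ≤ t₁ → 0 ≤ t₂ → |f t₁ - f t₂| ≤ M * |t₁ - t₂| ^ α)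
    (n : ℕ) (hn : 1 ≤ n) (x : ℝ) (hx : 0 ≤ x) :
    |stancuL B ν₁ ν₂ n f x - f x| ≤
      M * (Real.sqrt (stancuL B ν₁ ν₂ n (fun s => (s - x) ^ 2) x)) ^ α :=
  stancuL_lipschitz_estimate_general B ν₁ ν₂ hν₁ hν₂ α M hα hα1 hM f hf n x hx
end
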